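/- Fix an integer N ≥ 2 and constants L > 0, M > 1. There exists a constant C > 0, depending only on N, L and M, such that for every L-Lipschitz function f : Q' → [1, M] and every function u : ℝ^N → ℝ that is continuously differentiable on an open neighborhood of the closure of Q_f and satisfies u(x', 0) = 0 for all x' ∈ Q', one has ∫_{Q_f} u² dx ≤ C² ∫_{Q_f} |∇u|² dx. -/

import Mathlib

open Set MeasureTheory

noncomputable section

/-- Projection onto the first `d` coordinates. -/
def proj {d : ℕ} (x : EuclideanSpace ℝ (Fin (d + 1))) : EuclideanSpace ℝ (Fin d) :=
  WithLp.toLp 2 (fun i : Fin d => x i.castSucc)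

/-- Embedding of the base `Q' × {0}`. -/
def embed {d : ℕ} (y : EuclideanSpace ℝ (Fin d)) : EuclideanSpace ℝ (Fin (d + 1)) :=
  WithLp.toLp 2 (fun i : Fin (d + 1) => if h : (i : ℕ) < d then y ⟨i, h⟩ else 0)

/-- The open unit cube `Q' = (0,1)^d`. -/
def cube (d : ℕ) : Set (EuclideanSpace ℝ (Fin d)) :=
  {y | ∀ i, y i ∈ Ioo (0 : ℝ) 1}

/-- The open subgraph domain `Q_f`. -/
def Qf {d : ℕ} (f : EuclideanSpace ℝ (Fin d) → ℝ) : Set (EuclideanSpace ℝ (Fin (d + 1))) :=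
  {x | proj x ∈ cube d ∧ x (Fin.last d) ∈ Ioo 0 (f (proj x))}

/-!
On every vertical segment `{y} × (0, f y)` the function `u` vanishes at the bottom, so the
fundamental theorem of calculus and Cauchy–Schwarz give the one-dimensional Poincaré inequality
`∫₀ᵃ g² ≤ a² ∫₀ᵃ g'²` with `a = f y ≤ M`, and the vertical derivative of `u` is bounded by `|∇u|`.
Integrating over `y ∈ Q'` (Fubini) gives the inequality with `C = M`.
-/

theorem sq_setIntegral_le_measureReal_mul_setIntegral_sq {α : Type*} [MeasurableSpace α]
    {μ : Measure α} {s : Set α} (hs : μ s ≠ ⊤) {g : α → ℝ} (hg : IntegrableOn g s μ)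
    (hg2 : IntegrableOn (fun x => g x ^ 2) s μ) :
    (∫ x in s, g x ∂μ) ^ 2 ≤ μ.real s * ∫ x in s, g x ^ 2 ∂μ := by
  rcases eq_or_ne (μ s) 0 with hs0 | hs0
  · simp [Measure.restrict_eq_zero.2 hs0]
  have hjensen := (even_two.convexOn_pow).map_set_average_le (continuousOn_pow 2) isClosed_univ
    hs0 hs (by simp) hg hg2
  have hpos : 0 < μ.real s := ENNReal.toReal_pos hs0 hs
  simp only [setAverage_eq, smul_eq_mul, mul_pow] at hjensen
  rw [inv_pow, ← div_eq_inv_mul, ← div_eq_inv_mul, div_le_div_iff₀ (by positivity) hpos] at hjensen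
  nlinarith

theorem setIntegral_Ioo_sq_le_of_hasDerivAt {g g' : ℝ → ℝ} {a : ℝ} (ha : 0 ≤ a)
    (hg : ∀ t ∈ Icc 0 a, HasDerivAt g (g' t) t) (hg' : ContinuousOn g' (Icc 0 a))
    (hg0 : g 0 = 0) :
    ∫ t in Ioo 0 a, g t ^ 2 ≤ a ^ 2 * ∫ t in Ioo 0 a, g' t ^ 2 := by
  have hint : ∀ {t}, t ≤ a → IntegrableOn (fun s => g' s ^ 2) (Ioc 0 t) := fun ht =>
    ((hg'.pow 2).integrableOn_Icc).mono_set (Ioc_subset_Icc_self.trans (Icc_subset_Icc le_rfl ht))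
  have hpoint : ∀ t ∈ Ioo 0 a, ‖g t ^ 2‖ ≤ a * ∫ s in Ioo 0 a, g' s ^ 2 := by
    intro t ht
    have hsub : Icc 0 t ⊆ Icc 0 a := Icc_subset_Icc le_rfl ht.2.le
    have hftc : g t = ∫ s in Ioc 0 t, g' s := by
      rw [← intervalIntegral.integral_of_le ht.1.le, intervalIntegral.integral_eq_sub_of_hasDerivAt
        (fun s hs => hg s (hsub (uIcc_of_le ht.1.le ▸ hs)))
        ((hg'.mono (uIcc_of_le ht.1.le ▸ hsub)).intervalIntegrable), hg0, sub_zero]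
    calc ‖g t ^ 2‖ = (∫ s in Ioc 0 t, g' s) ^ 2 := by rw [Real.norm_of_nonneg (sq_nonneg _), hftc]
      _ ≤ volume.real (Ioc 0 t) * ∫ s in Ioc 0 t, g' s ^ 2 :=
        sq_setIntegral_le_measureReal_mul_setIntegral_sq measure_Ioc_lt_top.ne
          ((hg'.mono hsub).integrableOn_Icc.mono_set Ioc_subset_Icc_self) (hint ht.2.le)
      _ ≤ a * ∫ s in Ioc 0 a, g' s ^ 2 := by
        rw [Real.volume_real_Ioc_of_le ht.1.le, sub_zero]
        exact mul_le_mul ht.2.le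
          (setIntegral_mono_set (hint le_rfl) (.of_forall fun _ => sq_nonneg _)
            (Ioc_subset_Ioc_right ht.2.le).eventuallyLE)
          (setIntegral_nonneg measurableSet_Ioc fun _ _ => sq_nonneg _) ha
      _ = a * ∫ s in Ioo 0 a, g' s ^ 2 := by rw [integral_Ioc_eq_integral_Ioo]
  calc ∫ t in Ioo 0 a, g t ^ 2 ≤ ‖∫ t in Ioo 0 a, g t ^ 2‖ := Real.le_norm_self _
    _ ≤ (a * ∫ s in Ioo 0 a, g' s ^ 2) * volume.real (Ioo 0 a) :=
      norm_setIntegral_le_of_norm_le_const measure_Ioo_lt_top hpoint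
    _ = a ^ 2 * ∫ t in Ioo 0 a, g' t ^ 2 := by rw [Real.volume_real_Ioo_of_le ha]; ring

theorem setIntegral_Ioo_sq_comp_add_smul_le {E : Type*} [NormedAddCommGroup E] [NormedSpace ℝ E]
    {u : E → ℝ} {U : Set E} (hU : IsOpen U) (hu : ContDiffOn ℝ 1 u U) {x e : E} (he : ‖e‖ ≤ 1)
    {a : ℝ} (ha : 0 ≤ a) (hseg : ∀ t ∈ Icc 0 a, x + t • e ∈ U) (hx : u x = 0) :
    ∫ t in Ioo 0 a, u (x + t • e) ^ 2 ≤ a ^ 2 * ∫ t in Ioo 0 a, ‖fderiv ℝ u (x + t • e)‖ ^ 2 := by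
  have hline : Continuous fun t : ℝ => x + t • e := by fun_prop
  have hDu : ContinuousOn (fun t : ℝ => fderiv ℝ u (x + t • e)) (Icc 0 a) :=
    (hu.continuousOn_fderiv_of_isOpen hU le_rfl).comp hline.continuousOn hseg
  have hderiv : ∀ t ∈ Icc 0 a,
      HasDerivAt (fun t : ℝ => u (x + t • e)) (fderiv ℝ u (x + t • e) e) t := fun t ht =>
    ((hu.differentiableOn one_ne_zero).differentiableAt (hU.mem_nhds (hseg t ht))).hasFDerivAt
      |>.comp_hasDerivAt t (by simpa using ((hasDerivAt_id t).smul_const e).const_add x)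
  have hpartial : ∀ t : ℝ, (fderiv ℝ u (x + t • e) e) ^ 2 ≤ ‖fderiv ℝ u (x + t • e)‖ ^ 2 := by
    intro t
    rw [← sq_abs, ← Real.norm_eq_abs]
    gcongr
    exact (ContinuousLinearMap.le_opNorm _ _).trans (mul_le_of_le_one_right (norm_nonneg _) he)
  calc ∫ t in Ioo 0 a, u (x + t • e) ^ 2
      ≤ a ^ 2 * ∫ t in Ioo 0 a, (fderiv ℝ u (x + t • e) e) ^ 2 :=
        setIntegral_Ioo_sq_le_of_hasDerivAt ha hderiv
          (hDu.clm_apply continuousOn_const) (by simpa using hx)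
    _ ≤ a ^ 2 * ∫ t in Ioo 0 a, ‖fderiv ℝ u (x + t • e)‖ ^ 2 := by
        refine mul_le_mul_of_nonneg_left
          (setIntegral_mono_on ?_ ?_ measurableSet_Ioo fun t _ => hpartial t) (sq_nonneg a)
        · exact ((hDu.clm_apply continuousOn_const).pow 2).integrableOn_Icc.mono_set
            Ioo_subset_Icc_self
        · exact (hDu.norm.pow 2).integrableOn_Icc.mono_set Ioo_subset_Icc_self

theorem norm_gradient_eq_norm_fderiv {E : Type*} [NormedAddCommGroup E] [InnerProductSpace ℝ E]
    [CompleteSpace E] (u : E → ℝ) (x : E) : ‖gradient u x‖ = ‖fderiv ℝ u x‖ :=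
  LinearIsometryEquiv.norm_map _ _

theorem setIntegral_prod_le_of_forall_fiber {α β : Type*} [MeasurableSpace α] [MeasurableSpace β]
    {μ : Measure α} {ν : Measure β} [SFinite μ] [SFinite ν] {S : Set (α × β)} (hS : MeasurableSet S)
    {F G : α × β → ℝ} (hF : IntegrableOn F S (μ.prod ν)) (hG : IntegrableOn G S (μ.prod ν))
    (hFG : ∀ x, ∫ y in Prod.mk x ⁻¹' S, F (x, y) ∂ν ≤ ∫ y in Prod.mk x ⁻¹' S, G (x, y) ∂ν) :
    ∫ p in S, F p ∂(μ.prod ν) ≤ ∫ p in S, G p ∂(μ.prod ν) := by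
  have hfiber : ∀ (H : α × β → ℝ) x,
      ∫ y, S.indicator H (x, y) ∂ν = ∫ y in Prod.mk x ⁻¹' S, H (x, y) ∂ν := fun H x => by
    rw [← integral_indicator (measurable_prodMk_left hS)]
    rfl
  rw [← integral_indicator hS, ← integral_indicator hS]
  have hF' := (integrable_indicator_iff hS).2 hF
  have hG' := (integrable_indicator_iff hS).2 hG
  rw [integral_prod _ hF', integral_prod _ hG']
  refine integral_mono hF'.integral_prod_left hG'.integral_prod_left fun x => ?_
  simp only [hfiber]
  exact hFG x

/-- `ℝ^d × ℝ ≃ ℝ^{d+1}`, the `ℝ` factor becoming the last coordinate (see `vertCoord_apply`). -/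
def vertCoord (d : ℕ) : (EuclideanSpace ℝ (Fin d) × ℝ) ≃ᵐ EuclideanSpace ℝ (Fin (d + 1)) :=
  ((MeasurableEquiv.toLp 2 (Fin d → ℝ)).symm.prodCongr (MeasurableEquiv.refl ℝ)).trans <|
    MeasurableEquiv.prodComm.trans <|
      (MeasurableEquiv.piFinSuccAbove (fun _ => ℝ) (Fin.last d)).symm.trans
        (MeasurableEquiv.toLp 2 (Fin (d + 1) → ℝ))

theorem vertCoord_apply_castSucc {d : ℕ} (p : EuclideanSpace ℝ (Fin d) × ℝ) (i : Fin d) :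
    vertCoord d p i.castSucc = p.1 i := by
  show Fin.insertNth (α := fun _ => ℝ) (Fin.last d) p.2 (p.1 : Fin d → ℝ) i.castSucc = _
  rw [Fin.insertNth_last', Fin.snoc_castSucc]

theorem vertCoord_apply_last {d : ℕ} (p : EuclideanSpace ℝ (Fin d) × ℝ) :
    vertCoord d p (Fin.last d) = p.2 := by
  show Fin.insertNth (α := fun _ => ℝ) (Fin.last d) p.2 (p.1 : Fin d → ℝ) (Fin.last d) = _
  rw [Fin.insertNth_last', Fin.snoc_last]

theorem vertCoord_apply {d : ℕ} (p : EuclideanSpace ℝ (Fin d) × ℝ) :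
    vertCoord d p = embed p.1 + p.2 • EuclideanSpace.single (Fin.last d) 1 := by
  ext i
  induction i using Fin.lastCases with
  | last => simp [vertCoord_apply_last, embed]
  | cast i => simp [vertCoord_apply_castSucc, embed, (Fin.castSucc_lt_last i).ne]

theorem measurePreserving_vertCoord (d : ℕ) : MeasurePreserving (vertCoord d) :=
  ((EuclideanSpace.volume_preserving_symm_measurableEquiv_toLp (Fin d)).prod
      (MeasurePreserving.id volume)).trans <|
    Measure.measurePreserving_swap.trans <|
      (volume_preserving_piFinSuccAbove (fun _ => ℝ) (Fin.last d)).symm.trans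
        (PiLp.volume_preserving_toLp (Fin (d + 1)))

theorem vertCoord_preimage_Qf {d : ℕ} (f : EuclideanSpace ℝ (Fin d) → ℝ) :
    vertCoord d ⁻¹' Qf f = {p | p.1 ∈ cube d ∧ p.2 ∈ Ioo 0 (f p.1)} := by
  have hproj : ∀ p, proj (vertCoord d p) = p.1 := fun p => by
    ext i; exact vertCoord_apply_castSucc p i
  ext p
  simp only [Qf, mem_preimage, mem_ofPred_eq, hproj, vertCoord_apply_last]

theorem setIntegral_Qf_le_of_forall_vertical {d : ℕ} {f : EuclideanSpace ℝ (Fin d) → ℝ}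
    (hQ : MeasurableSet (Qf f)) {F G : EuclideanSpace ℝ (Fin (d + 1)) → ℝ}
    (hF : IntegrableOn F (Qf f)) (hG : IntegrableOn G (Qf f))
    (hFG : ∀ y ∈ cube d, ∫ t in Ioo 0 (f y), F (vertCoord d (y, t))
      ≤ ∫ t in Ioo 0 (f y), G (vertCoord d (y, t))) :
    ∫ x in Qf f, F x ≤ ∫ x in Qf f, G x := by
  have hmp := measurePreserving_vertCoord d
  have hemb := (vertCoord d).measurableEmbedding
  rw [← hmp.setIntegral_preimage_emb hemb, ← hmp.setIntegral_preimage_emb hemb]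
  refine setIntegral_prod_le_of_forall_fiber (hQ.preimage (vertCoord d).measurable)
    ((hmp.integrableOn_comp_preimage hemb).2 hF) ((hmp.integrableOn_comp_preimage hemb).2 hG)
    fun y => ?_
  by_cases hy : y ∈ cube d
  · have hfiber : Prod.mk y ⁻¹' (vertCoord d ⁻¹' Qf f) = Ioo 0 (f y) := by
      ext t; simp [vertCoord_preimage_Qf, hy]
    rw [hfiber]
    exact hFG y hy
  · have hfiber : Prod.mk y ⁻¹' (vertCoord d ⁻¹' Qf f) = ∅ := by
      ext t; simp [vertCoord_preimage_Qf, hy]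
    simp [hfiber]

theorem isOpen_Qf {d : ℕ} {f : EuclideanSpace ℝ (Fin d) → ℝ} (hf : ContinuousOn f (cube d)) :
    IsOpen (Qf f) := by
  have hcube : IsOpen (cube d) := by
    simp only [cube, ofPred_forall]
    exact isOpen_iInter_of_finite fun i => isOpen_Ioo.preimage (PiLp.continuous_apply 2 _ i)
  have hproj : Continuous (proj (d := d)) :=
    (PiLp.continuous_toLp 2 _).comp (continuous_pi fun i => PiLp.continuous_apply 2 _ _)
  have hlast : Continuous fun x : EuclideanSpace ℝ (Fin (d + 1)) => x (Fin.last d) :=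
    PiLp.continuous_apply 2 _ _
  have hlt : IsOpen {q : ℝ × ℝ | 0 < q.1 ∧ q.1 < q.2} :=
    (isOpen_lt continuous_const continuous_fst).inter (isOpen_lt continuous_fst continuous_snd)
  exact (hlast.continuousOn.prodMk (hf.comp hproj.continuousOn fun _ h => h)).isOpen_inter_preimage
    (hcube.preimage hproj) hlt

theorem isCompact_closure_Qf {d : ℕ} {f : EuclideanSpace ℝ (Fin d) → ℝ} {M : ℝ}
    (hfM : ∀ y ∈ cube d, f y ≤ M) : IsCompact (closure (Qf f)) := by
  have hbox := (PiLp.lipschitzWith_toLp 2 (fun _ : Fin (d + 1) => ℝ)).isBounded_image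
    (Metric.isBounded_Icc 0 fun _ => max 1 M)
  refine (hbox.subset ?_).isCompact_closure
  rintro x ⟨hx, hxl⟩
  have hcoord : ∀ i, x i ∈ Icc 0 (max 1 M) := Fin.lastCases
    ⟨hxl.1.le, hxl.2.le.trans ((hfM _ hx).trans (le_max_right _ _))⟩
    fun i => ⟨(hx i).1.le, (hx i).2.le.trans (le_max_left _ _)⟩
  exact ⟨WithLp.ofLp x, ⟨fun i => (hcoord i).1, fun i => (hcoord i).2⟩, rfl⟩

theorem vertCoord_mem_closure_Qf {d : ℕ} {f : EuclideanSpace ℝ (Fin d) → ℝ}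
    {y : EuclideanSpace ℝ (Fin d)} (hy : y ∈ cube d) {t : ℝ} (ht : t ∈ Icc 0 (f y))
    (hfy : 0 < f y) : vertCoord d (y, t) ∈ closure (Qf f) := by
  have hline : Continuous fun t : ℝ => vertCoord d (y, t) := by
    simp only [vertCoord_apply]
    fun_prop
  refine map_mem_closure (f := fun t => vertCoord d (y, t)) hline (closure_Ioo hfy.ne ▸ ht)
    fun s hs => ?_
  rw [← mem_preimage, vertCoord_preimage_Qf]
  exact ⟨hy, hs⟩

theorem stmt_10_general (d : ℕ) (L M : ℝ) (hM : 1 < M) :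
    ∃ C > (0 : ℝ), ∀ f : EuclideanSpace ℝ (Fin d) → ℝ,
      (∀ y ∈ cube d, f y ∈ Icc 1 M) →
      LipschitzOnWith L.toNNReal f (cube d) →
      ∀ (u : EuclideanSpace ℝ (Fin (d + 1)) → ℝ) (U : Set (EuclideanSpace ℝ (Fin (d + 1)))),
        IsOpen U → closure (Qf f) ⊆ U → ContDiffOn ℝ 1 u U →
        (∀ y ∈ cube d, u (embed y) = 0) →
        ∫ x in Qf f, (u x) ^ 2 ≤ C ^ 2 * ∫ x in Qf f, ‖gradient u x‖ ^ 2 := by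
  refine ⟨M, by linarith, fun f hf hfL u U hU hQU hu hu0 => ?_⟩
  have hK := isCompact_closure_Qf fun y hy => (hf y hy).2
  have hint : ∀ F : EuclideanSpace ℝ (Fin (d + 1)) → ℝ, ContinuousOn F U → IntegrableOn F (Qf f) :=
    fun F hF => ((hF.mono hQU).integrableOn_compact hK).mono_set subset_closure
  have hDu := hu.continuousOn_fderiv_of_isOpen hU le_rfl
  simp_rw [norm_gradient_eq_norm_fderiv, ← integral_const_mul]
  refine setIntegral_Qf_le_of_forall_vertical (isOpen_Qf hfL.continuousOn).measurableSet
    (hint _ (hu.continuousOn.pow 2)) (hint _ (continuousOn_const.mul (hDu.norm.pow 2)))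
    fun y hy => ?_
  obtain ⟨hfy, hfyM⟩ := hf y hy
  have hseg : ∀ t ∈ Icc 0 (f y), vertCoord d (y, t) ∈ U := fun t ht =>
    hQU (vertCoord_mem_closure_Qf hy ht (by linarith))
  simp only [vertCoord_apply] at hseg ⊢
  rw [integral_const_mul]
  calc _ ≤ f y ^ 2 * ∫ t in Ioo 0 (f y),
        ‖fderiv ℝ u (embed y + t • EuclideanSpace.single (Fin.last d) 1)‖ ^ 2 :=
        setIntegral_Ioo_sq_comp_add_smul_le hU hu (by simp) (by linarith) hseg
          (by simpa using hu0 y hy)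
    _ ≤ _ := by gcongr

theorem stmt_10 (d : ℕ) (hd : 1 ≤ d) (L M : ℝ) (hL : 0 < L) (hM : 1 < M) :
    ∃ C > (0 : ℝ), ∀ f : EuclideanSpace ℝ (Fin d) → ℝ,
      (∀ y ∈ cube d, f y ∈ Icc 1 M) →
      LipschitzOnWith L.toNNReal f (cube d) →
      ∀ (u : EuclideanSpace ℝ (Fin (d + 1)) → ℝ) (U : Set (EuclideanSpace ℝ (Fin (d + 1)))),
        IsOpen U → closure (Qf f) ⊆ U → ContDiffOn ℝ 1 u U →
        (∀ y ∈ cube d, u (embed y) = 0) →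
        ∫ x in Qf f, (u x) ^ 2 ≤ C ^ 2 * ∫ x in Qf f, ‖gradient u x‖ ^ 2 :=
  stmt_10_general d L M hM
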